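/- arXiv:1507.03747 — 2 statements merged into one kernel-verified Lean document; each statement's English description precedes it below -/
import Mathlib

section
/- Suppose |∂_α f| ≤ ĥ and |∂_α∂_β f| ≤ 1/R on K for all α, β ∈ {1,2}, with ĥ ≤ 1. Then the third fundamental form c_{αβ} = ∂_α n · ∂_β n of the graph surface approximates the square of the second fundamental form: |c_{αβ} − Σ_{λ=1}^{2} b_{αλ} b_{λβ}| ≤ 4 ĥ² / R² on K for all α, β ∈ {1,2}, where b_{αβ} = ∂_α∂_β f / w. -/
open Matrix

noncomputable section

/-- Partial derivative `∂_α g` of a scalar function on ℝ². -/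
def pder (g : (Fin 2 → ℝ) → ℝ) (α : Fin 2) (p : Fin 2 → ℝ) : ℝ :=
  fderiv ℝ g p (Pi.single α 1)

/-- Partial derivative `∂_α g` of an ℝ³-valued function on ℝ². -/
def pderV (g : (Fin 2 → ℝ) → (Fin 3 → ℝ)) (α : Fin 2) (p : Fin 2 → ℝ) : Fin 3 → ℝ :=
  fderiv ℝ g p (Pi.single α 1)

/-- Tangent vectors `e_α = i_α + ∂_α f · i_3` of the graph surface
`r(x,y) = (x, y, f(x,y))`. -/
def tangent (f : (Fin 2 → ℝ) → ℝ) (α : Fin 2) (p : Fin 2 → ℝ) : Fin 3 → ℝ :=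
  (Pi.single (Fin.castSucc α) 1 : Fin 3 → ℝ)
    + pder f α p • (Pi.single (2 : Fin 3) 1 : Fin 3 → ℝ)

/-- The normalizing factor `w = √(1 + (∂₁f)² + (∂₂f)²)`. -/
def wfun (f : (Fin 2 → ℝ) → ℝ) (p : Fin 2 → ℝ) : ℝ :=
  Real.sqrt (1 + (pder f 0 p) ^ 2 + (pder f 1 p) ^ 2)

/-- The unit normal `n = (−∂₁f, −∂₂f, 1)/w` of the graph surface. -/
def normalv (f : (Fin 2 → ℝ) → ℝ) (p : Fin 2 → ℝ) : Fin 3 → ℝ :=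
  (wfun f p)⁻¹ • ![-(pder f 0 p), -(pder f 1 p), 1]

lemma pder_contDiff {f : (Fin 2 → ℝ) → ℝ} (hf : ContDiff ℝ (⊤ : ℕ∞) f) (β : Fin 2) :
    ContDiff ℝ (⊤ : ℕ∞) (pder f β) :=
  (hf.fderiv_right (by simp)).clm_apply contDiff_const

lemma pder_comm {f : (Fin 2 → ℝ) → ℝ} (hf : ContDiff ℝ (⊤ : ℕ∞) f) (α β : Fin 2) (p : Fin 2 → ℝ) :
    pder (pder f β) α p = pder (pder f α) β p := by
  have hd : Differentiable ℝ (fderiv ℝ f) :=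
    (hf.fderiv_right (m := (⊤ : ℕ∞)) (by simp)).differentiable (by simp)
  have h2 : HasFDerivAt (fderiv ℝ f) (fderiv ℝ (fderiv ℝ f) p) p := (hd p).hasFDerivAt
  have hsymm := second_derivative_symmetric (fun y => (hf.differentiable (by simp) y).hasFDerivAt) h2
  have key : ∀ μ ν : Fin 2, pder (pder f ν) μ p
      = fderiv ℝ (fderiv ℝ f) p (Pi.single μ 1) (Pi.single ν 1) := by
    intro μ ν
    rw [show pder (pder f ν) μ p
      = fderiv ℝ (fun q => (fderiv ℝ f q) (Pi.single ν 1)) p (Pi.single μ 1) from rfl]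
    rw [fderiv_clm_apply (hd p) (differentiableAt_const _)]
    simp
  rw [key, key, hsymm]

lemma wfun_pos (f : (Fin 2 → ℝ) → ℝ) (p : Fin 2 → ℝ) : 0 < wfun f p :=
  Real.sqrt_pos.2 (by positivity)

lemma wfun_sq (f : (Fin 2 → ℝ) → ℝ) (p : Fin 2 → ℝ) :
    wfun f p ^ 2 = 1 + (pder f 0 p) ^ 2 + (pder f 1 p) ^ 2 := by
  rw [wfun, Real.sq_sqrt (by positivity)]

lemma third_alg (w a0 a1 u0 u1 v0 v1 : ℝ) (hw : 0 < w) (h2 : w^2 = 1 + a0^2 + a1^2) :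
    (((a0*u0+a1*u1)/w^3*a0 - u0/w)*((a0*v0+a1*v1)/w^3*a0 - v0/w)
      + ((a0*u0+a1*u1)/w^3*a1 - u1/w)*((a0*v0+a1*v1)/w^3*a1 - v1/w)
      + (-((a0*u0+a1*u1)/w^3))*(-((a0*v0+a1*v1)/w^3)))
      - (u0/w*(v0/w) + u1/w*(v1/w)) = -((a0*u0+a1*u1)*(a0*v0+a1*v1))/w^4 := by
  have hne : w ≠ 0 := hw.ne'
  have hQpos : (0:ℝ) < 1 + a0^2 + a1^2 := by positivity
  have hQne : (1 + a0^2 + a1^2) ≠ 0 := hQpos.ne'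
  have hww : w * w = 1 + a0^2 + a1^2 := by rw [← h2]; ring
  have h3 : ∀ x : ℝ, x / w^3 = (x/(1 + a0^2 + a1^2))/w := by
    intro x
    rw [div_div, ← hww, show w*w*w = w^3 by ring]
  have h4 : (w:ℝ)^4 = (1 + a0^2 + a1^2)^2 := by rw [← h2]; ring
  have hbr : ∀ x y c : ℝ, (x/(1 + a0^2 + a1^2))/w * c - y/w = ((x/(1 + a0^2 + a1^2))*c - y)/w := by
    intro x y c
    rw [div_mul_eq_mul_div, div_sub_div_same]
  have hprod : ∀ x y : ℝ, (x/w) * (y/w) = (x*y)/(1 + a0^2 + a1^2) := by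
    intro x y
    rw [div_mul_div_comm, hww]
  rw [h3, h3, h4, hbr, hbr, hbr, hbr, neg_mul_neg, hprod, hprod, hprod, hprod, hprod]
  field_simp
  ring

set_option maxHeartbeats 1000000 in
lemma pderV_normalv {f : (Fin 2 → ℝ) → ℝ} (hf : ContDiff ℝ (⊤ : ℕ∞) f) (α : Fin 2) (p : Fin 2 → ℝ) :
    pderV (normalv f) α p =
      ![(pder f 0 p * pder (pder f 0) α p + pder f 1 p * pder (pder f 1) α p) / wfun f p ^ 3
          * pder f 0 p - pder (pder f 0) α p / wfun f p,
        (pder f 0 p * pder (pder f 0) α p + pder f 1 p * pder (pder f 1) α p) / wfun f p ^ 3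
          * pder f 1 p - pder (pder f 1) α p / wfun f p,
        -((pder f 0 p * pder (pder f 0) α p + pder f 1 p * pder (pder f 1) α p) / wfun f p ^ 3)] := by
  have hD0 : HasFDerivAt (pder f 0) (fderiv ℝ (pder f 0) p) p :=
    (((pder_contDiff hf 0).differentiable (by simp)) p).hasFDerivAt
  have hD1 : HasFDerivAt (pder f 1) (fderiv ℝ (pder f 1) p) p :=
    (((pder_contDiff hf 1).differentiable (by simp)) p).hasFDerivAt
  set D0 := fderiv ℝ (pder f 0) p with hD0def
  set D1 := fderiv ℝ (pder f 1) p with hD1def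
  have hq0 : HasFDerivAt (fun q => 1 + pder f 0 q * pder f 0 q + pder f 1 q * pder f 1 q)
      (0 + (pder f 0 p • D0 + pder f 0 p • D0) + (pder f 1 p • D1 + pder f 1 p • D1)) p :=
    ((hasFDerivAt_const (1:ℝ) p).add (hD0.mul hD0)).add (hD1.mul hD1)
  have hfe : (fun q => 1 + pder f 0 q * pder f 0 q + pder f 1 q * pder f 1 q)
      = fun q => 1 + pder f 0 q ^ 2 + pder f 1 q ^ 2 := by funext q; ring
  rw [hfe] at hq0
  have hqpos : (0:ℝ) < 1 + pder f 0 p ^ 2 + pder f 1 p ^ 2 := by positivity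
  set Q := 0 + (pder f 0 p • D0 + pder f 0 p • D0) + (pder f 1 p • D1 + pder f 1 p • D1) with hQdef
  have hw : HasFDerivAt (wfun f)
      ((1 / (2 * Real.sqrt (1 + pder f 0 p ^ 2 + pder f 1 p ^ 2))) • Q) p :=
    (Real.hasDerivAt_sqrt hqpos.ne').comp_hasFDerivAt p hq0
  have hwne : wfun f p ≠ 0 := (wfun_pos f p).ne'
  set W := (1 / (2 * Real.sqrt (1 + pder f 0 p ^ 2 + pder f 1 p ^ 2))) • Q with hWdef
  have hwinv : HasFDerivAt (fun q => (wfun f q)⁻¹) (-(wfun f p ^ 2)⁻¹ • W) p :=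
    (hasDerivAt_inv hwne).comp_hasFDerivAt p hw
  have hN0 : HasFDerivAt (fun q => (wfun f q)⁻¹ * (-(pder f 0 q)))
      ((wfun f p)⁻¹ • (-D0) + (-(pder f 0 p)) • (-(wfun f p ^ 2)⁻¹ • W)) p :=
    hwinv.mul hD0.neg
  have hN1 : HasFDerivAt (fun q => (wfun f q)⁻¹ * (-(pder f 1 q)))
      ((wfun f p)⁻¹ • (-D1) + (-(pder f 1 p)) • (-(wfun f p ^ 2)⁻¹ • W)) p :=
    hwinv.mul hD1.neg
  have hN2 : HasFDerivAt (fun q => (wfun f q)⁻¹ * 1)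
      ((wfun f p)⁻¹ • (0 : (Fin 2 → ℝ) →L[ℝ] ℝ) + (1:ℝ) • (-(wfun f p ^ 2)⁻¹ • W)) p :=
    hwinv.mul (hasFDerivAt_const (1:ℝ) p)
  set C : Fin 3 → ((Fin 2 → ℝ) →L[ℝ] ℝ) :=
    ![(wfun f p)⁻¹ • (-D0) + (-(pder f 0 p)) • (-(wfun f p ^ 2)⁻¹ • W),
      (wfun f p)⁻¹ • (-D1) + (-(pder f 1 p)) • (-(wfun f p ^ 2)⁻¹ • W),
      (wfun f p)⁻¹ • (0 : (Fin 2 → ℝ) →L[ℝ] ℝ) + (1:ℝ) • (-(wfun f p ^ 2)⁻¹ • W)] with hCdef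
  have hN : HasFDerivAt (normalv f) (ContinuousLinearMap.pi C) p := by
    refine (hasFDerivAt_pi (x := p) (φ := fun i q => normalv f q i) (φ' := C)).2 ?_
    intro i
    fin_cases i
    · exact hN0.congr_of_eventuallyEq (Filter.Eventually.of_forall fun q => by
        simp [normalv])
    · exact hN1.congr_of_eventuallyEq (Filter.Eventually.of_forall fun q => by
        simp [normalv])
    · exact hN2.congr_of_eventuallyEq (Filter.Eventually.of_forall fun q => by
        simp [normalv])
  have hfd : pderV (normalv f) α p = (ContinuousLinearMap.pi C) (Pi.single α 1) := by
    rw [pderV, hN.fderiv]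
  have hD0e : D0 (Pi.single α 1) = pder (pder f 0) α p := rfl
  have hD1e : D1 (Pi.single α 1) = pder (pder f 1) α p := rfl
  have hsq : Real.sqrt (1 + pder f 0 p ^ 2 + pder f 1 p ^ 2) = wfun f p := rfl
  have hWe : W (Pi.single α 1) = (pder f 0 p * pder (pder f 0) α p
      + pder f 1 p * pder (pder f 1) α p) / wfun f p := by
    simp only [hWdef, hQdef, ContinuousLinearMap.smul_apply, ContinuousLinearMap.add_apply,
      ContinuousLinearMap.zero_apply, smul_eq_mul, hD0e, hD1e, hsq]
    field_simp
    ring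
  rw [hfd]
  funext i
  fin_cases i
  · show ((wfun f p)⁻¹ • (-D0) + (-(pder f 0 p)) • (-(wfun f p ^ 2)⁻¹ • W)) (Pi.single α 1) = _
    simp only [ContinuousLinearMap.add_apply, ContinuousLinearMap.smul_apply,
      ContinuousLinearMap.neg_apply, smul_eq_mul, hD0e, hWe]
    show _ = (pder f 0 p * pder (pder f 0) α p + pder f 1 p * pder (pder f 1) α p) / wfun f p ^ 3
          * pder f 0 p - pder (pder f 0) α p / wfun f p
    field_simp
    ring
  · show ((wfun f p)⁻¹ • (-D1) + (-(pder f 1 p)) • (-(wfun f p ^ 2)⁻¹ • W)) (Pi.single α 1) = _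
    simp only [ContinuousLinearMap.add_apply, ContinuousLinearMap.smul_apply,
      ContinuousLinearMap.neg_apply, smul_eq_mul, hD1e, hWe]
    show _ = (pder f 0 p * pder (pder f 0) α p + pder f 1 p * pder (pder f 1) α p) / wfun f p ^ 3
          * pder f 1 p - pder (pder f 1) α p / wfun f p
    field_simp
    ring
  · show ((wfun f p)⁻¹ • (0 : (Fin 2 → ℝ) →L[ℝ] ℝ) + (1:ℝ) • (-(wfun f p ^ 2)⁻¹ • W)) (Pi.single α 1) = _
    simp only [ContinuousLinearMap.add_apply, ContinuousLinearMap.smul_apply,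
      ContinuousLinearMap.neg_apply, ContinuousLinearMap.zero_apply, smul_eq_mul, hWe]
    show _ = -((pder f 0 p * pder (pder f 0) α p + pder f 1 p * pder (pder f 1) α p) / wfun f p ^ 3)
    field_simp
    ring

/-- Under the shallowness assumptions `|∂_α f| ≤ ĥ ≤ 1` and `|∂_α∂_β f| ≤ 1/R`
on `K`, the third fundamental form `c_{αβ} = ∂_α n · ∂_β n` of the graph surface
approximates the square of the second fundamental form:
`|c_{αβ} − Σ_λ b_{αλ} b_{λβ}| ≤ 4 ĥ² / R²` on `K`, where `b_{αβ} = ∂_α∂_β f / w`. -/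
theorem third_fundamental_form_approx
    (K : Set (Fin 2 → ℝ)) (hK : IsOpen K)
    (f : (Fin 2 → ℝ) → ℝ) (hf : ContDiff ℝ (⊤ : ℕ∞) f)
    (hhat R : ℝ) (hhat_pos : 0 < hhat) (hR_pos : 0 < R) (hhat_le : hhat ≤ 1)
    (hgrad : ∀ α : Fin 2, ∀ p ∈ K, |pder f α p| ≤ hhat)
    (hhess : ∀ α β : Fin 2, ∀ p ∈ K, |pder (pder f β) α p| ≤ 1 / R) :
    ∀ α β : Fin 2, ∀ p ∈ K,
      |pderV (normalv f) α p ⬝ᵥ pderV (normalv f) β p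
        - ∑ lam : Fin 2,
            (pder (pder f lam) α p / wfun f p) * (pder (pder f β) lam p / wfun f p)|
        ≤ 4 * hhat ^ 2 / R ^ 2 := by
  intro α β p hp
  have hwpos := wfun_pos f p
  have hwsq := wfun_sq f p
  rw [pderV_normalv hf α p, pderV_normalv hf β p]
  rw [show (∑ lam : Fin 2,
      (pder (pder f lam) α p / wfun f p) * (pder (pder f β) lam p / wfun f p))
    = (pder (pder f 0) α p / wfun f p * (pder (pder f 0) β p / wfun f p)
      + pder (pder f 1) α p / wfun f p * (pder (pder f 1) β p / wfun f p)) by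
    rw [Fin.sum_univ_two, pder_comm hf 0 β p, pder_comm hf 1 β p]]
  rw [show (![(pder f 0 p * pder (pder f 0) α p + pder f 1 p * pder (pder f 1) α p) / wfun f p ^ 3
          * pder f 0 p - pder (pder f 0) α p / wfun f p,
        (pder f 0 p * pder (pder f 0) α p + pder f 1 p * pder (pder f 1) α p) / wfun f p ^ 3
          * pder f 1 p - pder (pder f 1) α p / wfun f p,
        -((pder f 0 p * pder (pder f 0) α p + pder f 1 p * pder (pder f 1) α p) / wfun f p ^ 3)]
      ⬝ᵥ
      ![(pder f 0 p * pder (pder f 0) β p + pder f 1 p * pder (pder f 1) β p) / wfun f p ^ 3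
          * pder f 0 p - pder (pder f 0) β p / wfun f p,
        (pder f 0 p * pder (pder f 0) β p + pder f 1 p * pder (pder f 1) β p) / wfun f p ^ 3
          * pder f 1 p - pder (pder f 1) β p / wfun f p,
        -((pder f 0 p * pder (pder f 0) β p + pder f 1 p * pder (pder f 1) β p) / wfun f p ^ 3)])
      = (((pder f 0 p * pder (pder f 0) α p + pder f 1 p * pder (pder f 1) α p) / wfun f p ^ 3
            * pder f 0 p - pder (pder f 0) α p / wfun f p)
          * ((pder f 0 p * pder (pder f 0) β p + pder f 1 p * pder (pder f 1) β p) / wfun f p ^ 3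
            * pder f 0 p - pder (pder f 0) β p / wfun f p)
        + ((pder f 0 p * pder (pder f 0) α p + pder f 1 p * pder (pder f 1) α p) / wfun f p ^ 3
            * pder f 1 p - pder (pder f 1) α p / wfun f p)
          * ((pder f 0 p * pder (pder f 0) β p + pder f 1 p * pder (pder f 1) β p) / wfun f p ^ 3
            * pder f 1 p - pder (pder f 1) β p / wfun f p)
        + (-((pder f 0 p * pder (pder f 0) α p + pder f 1 p * pder (pder f 1) α p) / wfun f p ^ 3))
          * (-((pder f 0 p * pder (pder f 0) β p + pder f 1 p * pder (pder f 1) β p) / wfun f p ^ 3)))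
    by simp [dotProduct, Fin.sum_univ_three]]
  rw [third_alg (wfun f p) (pder f 0 p) (pder f 1 p)
      (pder (pder f 0) α p) (pder (pder f 1) α p)
      (pder (pder f 0) β p) (pder (pder f 1) β p) hwpos hwsq]
  -- Now bound |-(S*T)/w^4|
  set S := pder f 0 p * pder (pder f 0) α p + pder f 1 p * pder (pder f 1) α p with hSdef
  set T := pder f 0 p * pder (pder f 0) β p + pder f 1 p * pder (pder f 1) β p with hTdef
  have hw1 : (1:ℝ) ≤ wfun f p := by
    rw [← Real.sqrt_one]
    exact Real.sqrt_le_sqrt (by nlinarith [sq_nonneg (pder f 0 p), sq_nonneg (pder f 1 p)])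
  have hw4 : (1:ℝ) ≤ wfun f p ^ 4 := one_le_pow₀ hw1
  have hbound : ∀ γ : Fin 2,
      |pder f 0 p * pder (pder f 0) γ p + pder f 1 p * pder (pder f 1) γ p|
        ≤ hhat * (1/R) + hhat * (1/R) := by
    intro γ
    calc |pder f 0 p * pder (pder f 0) γ p + pder f 1 p * pder (pder f 1) γ p|
        ≤ |pder f 0 p * pder (pder f 0) γ p| + |pder f 1 p * pder (pder f 1) γ p| := abs_add_le _ _
      _ = |pder f 0 p| * |pder (pder f 0) γ p| + |pder f 1 p| * |pder (pder f 1) γ p| := by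
          rw [abs_mul, abs_mul]
      _ ≤ hhat * (1/R) + hhat * (1/R) := by
          gcongr
          · exact hgrad 0 p hp
          · exact hhess γ 0 p hp
          · exact hgrad 1 p hp
          · exact hhess γ 1 p hp
  have hS := hbound α
  have hT := hbound β
  rw [← hSdef] at hS
  rw [← hTdef] at hT
  have habs : |(-(S*T))/wfun f p ^ 4| = |S| * |T| / wfun f p ^ 4 := by
    rw [abs_div, abs_neg, abs_mul, abs_of_pos (by positivity : (0:ℝ) < wfun f p ^ 4)]
  rw [habs]
  have h1 : |S| * |T| / wfun f p ^ 4 ≤ |S| * |T| := div_le_self (by positivity) hw4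
  have h2 : |S| * |T| ≤ (hhat * (1/R) + hhat * (1/R)) * (hhat * (1/R) + hhat * (1/R)) :=
    mul_le_mul hS hT (abs_nonneg _) (by positivity)
  have h3 : (hhat * (1/R) + hhat * (1/R)) * (hhat * (1/R) + hhat * (1/R))
      = 4 * hhat ^ 2 / R ^ 2 := by field_simp; ring
  linarith
end
end

section
/- The reduced membrane strain space on the reference square is unisolvent with respect to its five degrees of freedom: if τ̂(x̂,ŷ) is the symmetric 2×2 matrix field with entries τ̂_{11} = a + b ŷ, τ̂_{12} = τ̂_{21} = c, τ̂_{22} = d + e x̂ (a, b, c, d, e ∈ ℝ) and ∫_{−1}^{1} τ̂_{11}(x̂, −1) dx̂ = 0, ∫_{−1}^{1} τ̂_{11}(x̂, 1) dx̂ = 0, ∫_{−1}^{1} τ̂_{22}(−1, ŷ) dŷ = 0, ∫_{−1}^{1} τ̂_{22}(1, ŷ) dŷ = 0 and ∫_{K̂} τ̂_{12} dx̂ dŷ = 0, then a = b = c = d = e = 0, i.e. τ̂ ≡ 0. -/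
/-- The reduced membrane strain space on the reference square `K̂ = [−1,1]²` is
unisolvent with respect to its five degrees of freedom: if
`τ̂₁₁ = a + bŷ`, `τ̂₁₂ = τ̂₂₁ = c`, `τ̂₂₂ = d + ex̂` and the integrals of the
tangential-tangential component along the four edges together with the integral
of `τ̂₁₂` over `K̂` all vanish, then `τ̂ ≡ 0`. -/
theorem membrane_space_unisolvent (a b c d e : ℝ)
    (τhat : ℝ × ℝ → Matrix (Fin 2) (Fin 2) ℝ)
    (hτhat : ∀ p : ℝ × ℝ, τhat p = !![a + b * p.2, c; c, d + e * p.1])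
    (hbot : (∫ x in (-1 : ℝ)..1, τhat (x, -1) 0 0) = 0)
    (htop : (∫ x in (-1 : ℝ)..1, τhat (x, 1) 0 0) = 0)
    (hleft : (∫ y in (-1 : ℝ)..1, τhat (-1, y) 1 1) = 0)
    (hright : (∫ y in (-1 : ℝ)..1, τhat (1, y) 1 1) = 0)
    (harea : (∫ x in (-1 : ℝ)..1, ∫ y in (-1 : ℝ)..1, τhat (x, y) 0 1) = 0) :
    a = 0 ∧ b = 0 ∧ c = 0 ∧ d = 0 ∧ e = 0 ∧ ∀ p : ℝ × ℝ, τhat p = 0 := by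
  simp [hτhat, intervalIntegral.integral_const] at hbot htop hleft hright harea
  have ha : a = 0 := by linarith
  have hb : b = 0 := by linarith
  have hc : c = 0 := by linarith
  have hd : d = 0 := by linarith
  have he : e = 0 := by linarith
  refine ⟨ha, hb, hc, hd, he, fun p => ?_⟩
  rw [hτhat, ha, hb, hc, hd, he]
  norm_num
  ext i j
  fin_cases i <;> fin_cases j <;> simp
end
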